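/- For c ≥ 6, e(c) = 3·e(c−2) + 2·e(c−3), where e(c) is the number of even-length sequences of nonzero integers with 2·Σ|a_i| − ℓ = c. -/

import Mathlib

open Classical

/-- The number of sign changes in a finite sequence of integers. -/
def signChanges (l : List ℤ) : ℕ :=
  ((l.zip l.tail).filter (fun p => p.1 * p.2 < 0)).length

/-- The sum of the absolute values of the entries. -/
def absSum (l : List ℤ) : ℕ := (l.map Int.natAbs).sum

/-- An even continued fraction representation: a nonempty even-length
sequence of nonzero integers. -/
def IsECF (l : List ℤ) : Prop :=
  l ≠ [] ∧ Even l.length ∧ ∀ x ∈ l, x ≠ 0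

/-- Palindromic or anti-palindromic sequences. -/
def IsPalOrAnti (l : List ℤ) : Prop :=
  l.reverse = l ∨ l.reverse = l.map (fun x => -x)

/-- The set `E(c)` of even continued fractions with crossing number `c`. -/
def Ecross (c : ℕ) : Set (List ℤ) :=
  {l | IsECF l ∧ (2 * absSum l : ℤ) - signChanges l = c}

/-- The set `E(c,b)` of even continued fractions with crossing number `c`
and braid index `b`. -/
def Eset (c b : ℕ) : Set (List ℤ) :=
  {l | IsECF l ∧ (2 * absSum l : ℤ) - signChanges l = c ∧
    (absSum l : ℤ) - signChanges l + 1 = b}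

noncomputable def e (c b : ℕ) : ℕ := (Eset c b).ncard

noncomputable def eTot (c : ℕ) : ℕ := (Ecross c).ncard

noncomputable def ep (c b : ℕ) : ℕ := (Eset c b ∩ {l | IsPalOrAnti l}).ncard

noncomputable def epTot (c : ℕ) : ℕ := (Ecross c ∩ {l | IsPalOrAnti l}).ncard

/-!
Write `c(l) = 2 Σ |aᵢ| - ℓ` and sort the sequences by the parity of their length. Look at the
first entry `a₁`. If `|a₁| ≥ 2`, moving it one step towards zero lowers `c` by 2 and keeps the
length. If `a₁ = ±1`, deleting it flips the parity of the length and lowers `c` by 2 when `a₂` has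
the same sign as `a₁`, by 1 otherwise. These moves are bijective, so the even and odd counts satisfy
`E(c+2) = E(c) + O(c) + O(c+1)` and, for `c ≥ 1`, `O(c+2) = O(c) + E(c) + E(c+1)`;
eliminating `O` gives the recursion.
-/

def crossing (l : List ℤ) : ℤ := 2 * absSum l - signChanges l

lemma signChanges_cons_cons (a b : ℤ) (t : List ℤ) :
    signChanges (a :: b :: t) = (if a * b < 0 then 1 else 0) + signChanges (b :: t) := by
  by_cases h : a * b < 0 <;> simp [signChanges, h, Nat.add_comm]

lemma crossing_singleton (a : ℤ) : crossing [a] = 2 * a.natAbs := by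
  simp [crossing, absSum, signChanges]

lemma crossing_cons_cons (a b : ℤ) (t : List ℤ) :
    crossing (a :: b :: t) = 2 * a.natAbs - (if a * b < 0 then 1 else 0) + crossing (b :: t) := by
  simp only [crossing, signChanges_cons_cons, absSum, List.map_cons, List.sum_cons]
  split_ifs <;> push_cast <;> ring

lemma crossing_cons_of_sign_eq {a a' : ℤ} (h : a'.sign = a.sign) (t : List ℤ) :
    crossing (a' :: t) = crossing (a :: t) + 2 * (a'.natAbs - a.natAbs : ℤ) := by
  cases t with
  | nil => simp only [crossing_singleton]; ring
  | cons b t =>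
    have : a' * b < 0 ↔ a * b < 0 := by
      rw [← Int.sign_eq_neg_one_iff_neg, ← Int.sign_eq_neg_one_iff_neg, Int.sign_mul,
        Int.sign_mul, h]
    simp only [crossing_cons_cons, this]; ring

lemma signChanges_le_length (l : List ℤ) : signChanges l ≤ l.length :=
  (List.length_filter_le _ _).trans (by simp)

lemma length_le_absSum {l : List ℤ} (h : ∀ x ∈ l, x ≠ 0) : l.length ≤ absSum l := by
  induction l with
  | nil => simp
  | cons a t ih =>
    have ha : 0 < a.natAbs := Int.natAbs_pos.2 (h a (by simp))
    have := ih fun x hx => h x (by simp [hx])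
    simp only [absSum, List.map_cons, List.sum_cons, List.length_cons] at this ⊢
    omega

lemma natAbs_le_absSum {l : List ℤ} {x : ℤ} (hx : x ∈ l) : x.natAbs ≤ absSum l :=
  List.le_sum_of_mem (List.mem_map_of_mem hx)

lemma absSum_le_crossing {l : List ℤ} (h : ∀ x ∈ l, x ≠ 0) : (absSum l : ℤ) ≤ crossing l := by
  have := (signChanges_le_length l).trans (length_le_absSum h)
  unfold crossing; omega

lemma finite_setOf_crossing_eq (k : ℤ) :
    {l : List ℤ | (∀ x ∈ l, x ≠ 0) ∧ crossing l = k}.Finite := by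
  have : Finite (Set.Icc (-k) k) := (Set.finite_Icc _ _).to_subtype
  refine ((List.finite_length_le (Set.Icc (-k) k) k.toNat).image (List.map (↑))).subset ?_
  rintro l ⟨h0, hk⟩
  have hsum := hk ▸ absSum_le_crossing h0
  have hlen := length_le_absSum h0
  have hmem : ∀ x ∈ l, x ∈ Set.Icc (-k) k := fun x hx => by
    have := natAbs_le_absSum hx
    rw [Set.mem_Icc]; omega
  obtain ⟨l', rfl⟩ : ∃ l' : List (Set.Icc (-k) k), l'.map (↑) = l := CanLift.prf l hmem
  refine ⟨l', ?_, rfl⟩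
  rw [List.length_map] at hlen
  show l'.length ≤ k.toNat
  omega

lemma Int.sign_add_sign (a : ℤ) : (a + a.sign).sign = a.sign := by
  rcases lt_trichotomy a 0 with h | rfl | h
  · rw [Int.sign_eq_neg_one_of_neg h, Int.sign_eq_neg_one_of_neg (by omega)]
  · rfl
  · rw [Int.sign_eq_one_of_pos h, Int.sign_eq_one_of_pos (by omega)]

lemma Int.natAbs_add_sign {a : ℤ} (ha : a ≠ 0) : (a + a.sign).natAbs = a.natAbs + 1 := by
  rcases lt_or_gt_of_ne ha with h | h
  · rw [Int.sign_eq_neg_one_of_neg h]; omega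
  · rw [Int.sign_eq_one_of_pos h]; omega

lemma Int.add_sign_injective : Function.Injective fun a : ℤ => a + a.sign := by
  intro a b hab
  simp only at hab
  rcases lt_trichotomy a 0 with ha | ha | ha <;> rcases lt_trichotomy b 0 with hb | hb | hb <;>
    simp only [Int.sign_eq_neg_one_of_neg, Int.sign_eq_one_of_pos, Int.sign_eq_zero_iff_zero.2,
      ha, hb] at hab <;>
    omega

lemma Int.exists_add_sign_eq {a : ℤ} (ha : 2 ≤ a.natAbs) : ∃ a', a' ≠ 0 ∧ a' + a'.sign = a := by
  rcases lt_or_gt_of_ne (show a ≠ 0 by omega) with h | h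
  · exact ⟨a + 1, by omega, by rw [Int.sign_eq_neg_one_of_neg (by omega)]; ring⟩
  · exact ⟨a - 1, by omega, by rw [Int.sign_eq_one_of_pos (by omega)]; ring⟩

lemma Int.eq_sign_of_natAbs_eq_one {a b : ℤ} (ha : a.natAbs = 1) (hb : b ≠ 0) :
    a = if a * b < 0 then -b.sign else b.sign := by
  obtain rfl | rfl : a = 1 ∨ a = -1 := by omega
  all_goals
    rcases lt_or_gt_of_ne hb with hb | hb
    · simp [hb, hb.le, Int.sign_eq_neg_one_of_neg hb]
    · simp [hb, hb.le, Int.sign_eq_one_of_pos hb]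

def crossingSet (p : ℕ → Prop) (c : ℕ) : Set (List ℤ) :=
  {l | l ≠ [] ∧ p l.length ∧ (∀ x ∈ l, x ≠ 0) ∧ crossing l = c}

instance (p : ℕ → Prop) (c : ℕ) : Finite (crossingSet p c) :=
  ((finite_setOf_crossing_eq c).subset fun _ hl => ⟨hl.2.2.1, hl.2.2.2⟩).to_subtype

def bumpHead : List ℤ → List ℤ
  | [] => []
  | a :: t => (a + a.sign) :: t

def consSign (l : List ℤ) : List ℤ := l.headI.sign :: l

def consNegSign (l : List ℤ) : List ℤ := -l.headI.sign :: l

lemma bumpHead_injective : Function.Injective bumpHead := by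
  rintro (_ | ⟨a, s⟩) (_ | ⟨b, t⟩) h <;> simp only [bumpHead, reduceCtorEq, List.cons.injEq] at h
  · rfl
  · rw [Int.add_sign_injective h.1, h.2]

lemma consSign_injective : Function.Injective consSign := fun _ _ h => (List.cons.inj h).2

lemma consNegSign_injective : Function.Injective consNegSign := fun _ _ h => (List.cons.inj h).2

section

variable {p : ℕ → Prop} {c : ℕ} {l : List ℤ}

lemma bumpHead_mem (hl : l ∈ crossingSet p c) : bumpHead l ∈ crossingSet p (c + 2) := by
  obtain ⟨hne, hp, h0, hc⟩ := hl
  obtain ⟨a, t, rfl⟩ := List.exists_cons_of_ne_nil hne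
  have ha : a ≠ 0 := h0 a List.mem_cons_self
  refine ⟨List.cons_ne_nil _ _, hp, ?_, ?_⟩
  · rintro x (_ | ⟨_, hx⟩)
    · exact fun h => ha (by simpa [h] using Int.natAbs_add_sign ha)
    · exact h0 x (List.mem_cons_of_mem _ hx)
  · rw [bumpHead, crossing_cons_of_sign_eq (Int.sign_add_sign a), hc, Int.natAbs_add_sign ha]
    push_cast; ring

lemma consSign_mem (hl : l ∈ crossingSet (fun n => p (n + 1)) c) :
    consSign l ∈ crossingSet p (c + 2) := by
  obtain ⟨hne, hp, h0, hc⟩ := hl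
  obtain ⟨b, t, rfl⟩ := List.exists_cons_of_ne_nil hne
  have hb : b ≠ 0 := h0 b List.mem_cons_self
  have hpos : ¬ b.sign * b < 0 := by rw [Int.sign_mul_self_eq_natAbs]; omega
  refine ⟨List.cons_ne_nil _ _, hp, ?_, ?_⟩
  · rintro x (_ | ⟨_, hx⟩)
    · exact mt Int.sign_eq_zero_iff_zero.1 hb
    · exact h0 x hx
  · rw [consSign, List.headI_cons, crossing_cons_cons, if_neg hpos, hc,
      Int.natAbs_sign_of_ne_zero hb]
    push_cast; ring

lemma consNegSign_mem (hl : l ∈ crossingSet (fun n => p (n + 1)) (c + 1)) :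
    consNegSign l ∈ crossingSet p (c + 2) := by
  obtain ⟨hne, hp, h0, hc⟩ := hl
  obtain ⟨b, t, rfl⟩ := List.exists_cons_of_ne_nil hne
  have hb : b ≠ 0 := h0 b List.mem_cons_self
  have hneg : -b.sign * b < 0 := by rw [neg_mul, Int.sign_mul_self_eq_natAbs]; omega
  refine ⟨List.cons_ne_nil _ _, hp, ?_, ?_⟩
  · rintro x (_ | ⟨_, hx⟩)
    · exact neg_ne_zero.2 (mt Int.sign_eq_zero_iff_zero.1 hb)
    · exact h0 x hx
  · rw [consNegSign, List.headI_cons, crossing_cons_cons, if_pos hneg, hc, Int.natAbs_neg,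
      Int.natAbs_sign_of_ne_zero hb]
    push_cast; ring

lemma mem_image_of_mem_crossingSet_add_two (hl : l ∈ crossingSet p (c + 2))
    (h : ¬(p 1 ∧ c = 0)) :
    l ∈ bumpHead '' crossingSet p c ∪ consSign '' crossingSet (fun n => p (n + 1)) c ∪
      consNegSign '' crossingSet (fun n => p (n + 1)) (c + 1) := by
  obtain ⟨hne, hp, h0, hc⟩ := hl
  obtain ⟨a, t, rfl⟩ := List.exists_cons_of_ne_nil hne
  have ha : a ≠ 0 := h0 a List.mem_cons_self
  by_cases h2 : 2 ≤ a.natAbs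
  · obtain ⟨a', ha', rfl⟩ := Int.exists_add_sign_eq h2
    refine .inl (.inl ⟨a' :: t, ⟨List.cons_ne_nil _ _, hp, ?_, ?_⟩, rfl⟩)
    · rintro x (_ | ⟨_, hx⟩)
      · exact ha'
      · exact h0 x (List.mem_cons_of_mem _ hx)
    · have := crossing_cons_of_sign_eq (Int.sign_add_sign a') t
      rw [hc, Int.natAbs_add_sign ha'] at this
      push_cast at this; linarith
  have h1 : a.natAbs = 1 := by omega
  obtain _ | ⟨b, t⟩ := t
  · rw [crossing_singleton, h1] at hc
    exact absurd ⟨hp, by omega⟩ h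
  have hb : b ≠ 0 := h0 b (by simp)
  have htail {k : ℕ} (hk : crossing (b :: t) = k) : b :: t ∈ crossingSet (fun n => p (n + 1)) k :=
    ⟨List.cons_ne_nil _ _, hp, fun x hx => h0 x (List.mem_cons_of_mem _ hx), hk⟩
  have hsplit := Int.eq_sign_of_natAbs_eq_one h1 hb
  rw [crossing_cons_cons, h1] at hc
  push_cast at hc
  by_cases hab : a * b < 0
  · rw [if_pos hab] at hc hsplit
    exact .inr ⟨b :: t, htail (by push_cast; omega), by rw [consNegSign, List.headI_cons, hsplit]⟩
  · rw [if_neg hab] at hc hsplit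
    exact .inl (.inr ⟨b :: t, htail (by omega), by rw [consSign, List.headI_cons, hsplit]⟩)

-- The side condition excludes `[±1]`, which has crossing number 2 but no predecessor.
lemma crossingSet_add_two (h : ¬(p 1 ∧ c = 0)) :
    crossingSet p (c + 2) = bumpHead '' crossingSet p c ∪
      consSign '' crossingSet (fun n => p (n + 1)) c ∪
      consNegSign '' crossingSet (fun n => p (n + 1)) (c + 1) := by
  refine subset_antisymm (fun l hl => mem_image_of_mem_crossingSet_add_two hl h) ?_
  refine Set.union_subset (Set.union_subset ?_ ?_) ?_ <;> rintro _ ⟨l, hl, rfl⟩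
  exacts [bumpHead_mem hl, consSign_mem hl, consNegSign_mem hl]

lemma two_le_natAbs_headI_bumpHead (hl : l ∈ crossingSet p c) :
    2 ≤ (bumpHead l).headI.natAbs := by
  obtain ⟨a, t, rfl⟩ := List.exists_cons_of_ne_nil hl.1
  rw [bumpHead, List.headI_cons, Int.natAbs_add_sign (hl.2.2.1 a List.mem_cons_self)]
  have := Int.natAbs_pos.2 (hl.2.2.1 a List.mem_cons_self)
  omega

lemma ncard_crossingSet_add_two (h : ¬(p 1 ∧ c = 0)) :
    (crossingSet p (c + 2)).ncard = (crossingSet p c).ncard +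
      (crossingSet (fun n => p (n + 1)) c).ncard +
      (crossingSet (fun n => p (n + 1)) (c + 1)).ncard := by
  have natAbs_sign_le (a : ℤ) : a.sign.natAbs ≤ 1 := by rw [Int.natAbs_sign]; split_ifs <;> omega
  have disj_bump : Disjoint (bumpHead '' crossingSet p c)
      (consSign '' crossingSet (fun n => p (n + 1)) c) := by
    refine Set.disjoint_left.2 ?_
    rintro _ ⟨l, hl, rfl⟩ ⟨m, -, hm⟩
    have := two_le_natAbs_headI_bumpHead hl
    rw [← hm, consSign, List.headI_cons] at this
    exact absurd (natAbs_sign_le m.headI) (by omega)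
  have disj_neg : Disjoint (bumpHead '' crossingSet p c ∪
      consSign '' crossingSet (fun n => p (n + 1)) c)
      (consNegSign '' crossingSet (fun n => p (n + 1)) (c + 1)) := by
    refine Set.disjoint_left.2 ?_
    rintro _ (⟨l, hl, rfl⟩ | ⟨l, hl, rfl⟩) ⟨m, -, hm⟩
    · have := two_le_natAbs_headI_bumpHead hl
      rw [← hm, consNegSign, List.headI_cons, Int.natAbs_neg] at this
      exact absurd (natAbs_sign_le m.headI) (by omega)
    · obtain ⟨hsign, rfl⟩ := List.cons.inj hm
      obtain ⟨a, t, rfl⟩ := List.exists_cons_of_ne_nil hl.1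
      rw [List.headI_cons] at hsign
      exact hl.2.2.1 a List.mem_cons_self (Int.sign_eq_zero_iff_zero.1 (by omega))
  rw [crossingSet_add_two h, Set.ncard_union_eq disj_neg, Set.ncard_union_eq disj_bump,
    Set.ncard_image_of_injective _ bumpHead_injective,
    Set.ncard_image_of_injective _ consSign_injective,
    Set.ncard_image_of_injective _ consNegSign_injective]

end

lemma ncard_crossingSet_even_add_two (c : ℕ) :
    (crossingSet Even (c + 2)).ncard = (crossingSet Even c).ncard +
      (crossingSet Odd c).ncard + (crossingSet Odd (c + 1)).ncard := by
  simpa only [Nat.even_add_one, Nat.not_even_iff_odd] using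
    ncard_crossingSet_add_two (p := Even) (c := c) (by simp)

lemma ncard_crossingSet_odd_add_two {c : ℕ} (hc : c ≠ 0) :
    (crossingSet Odd (c + 2)).ncard = (crossingSet Odd c).ncard +
      (crossingSet Even c).ncard + (crossingSet Even (c + 1)).ncard := by
  simpa only [Nat.odd_add_one, Nat.not_odd_iff_even] using
    ncard_crossingSet_add_two (p := Odd) (c := c) (by simp [hc])

lemma eTot_eq_ncard_crossingSet (c : ℕ) : eTot c = (crossingSet Even c).ncard := by
  simp only [eTot, Ecross, crossingSet, IsECF, crossing, and_assoc]

theorem eTot_recursion (c : ℕ) (hc : 6 ≤ c) :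
    eTot c = 3 * eTot (c - 2) + 2 * eTot (c - 3) := by
  obtain ⟨n, rfl⟩ := Nat.exists_eq_add_of_le' hc
  simp only [eTot_eq_ncard_crossingSet, show n + 6 - 2 = n + 4 by omega,
    show n + 6 - 3 = n + 3 by omega]
  have e6 := ncard_crossingSet_even_add_two (n + 4)
  have e4 := ncard_crossingSet_even_add_two (n + 2)
  have o5 := ncard_crossingSet_odd_add_two (c := n + 3) (by omega)
  have o4 := ncard_crossingSet_odd_add_two (c := n + 2) (by omega)
  simp only [add_assoc, Nat.reduceAdd] at e6 e4 o5 o4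
  omega
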